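/- arXiv:2307.07661 — 4 statements merged into one kernel-verified Lean document; each statement's English description precedes it below -/
import Mathlib

section
/- If X is a cubical complex admitting a diagram system (D, ε), then for every n ≥ 0 the abelian group U_n(X) is generated by the elements ε_0(a) where a ranges over (isomorphism classes of) objects of D of order at most n. -/
/-!
Induct on the order of an object `q`. If `|q| > n`, labelling `n + 1` elements of `F q` gives
an `(n+1)`-cell of `D^□` whose top corner is `q` itself and whose other corners are proper
subdiagrams of `q`. Pushed to `X` by `ε`, its corner relation in `Uₙ(X)` writes `±ε₀(q)` as a
combination of `ε₀` of objects of smaller order. Since `ε₀` is surjective, these elements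
generate `Uₙ(X)`.
-/
open CategoryTheory Opposite

/-- The combinatorial `n`-cube: functions `[n] → {0,1}`. -/
abbrev Cube (n : ℕ) := Fin n → Bool

/-- A function between combinatorial cubes is a cube map if it admits a pair `(f, s)` where
`f : [m] → [n]` is injective, `s` assigns a fixed bit to every coordinate outside the image
of `f`, every coordinate of the input is copied to its `f`-image coordinate, and every point
of the image agrees with `s` outside the image of `f`. -/
def IsCubeMap {m n : ℕ} (a : Cube m → Cube n) : Prop :=
  ∃ (f : Fin m → Fin n) (s : Fin n → Bool),
    Function.Injective f ∧
    (∀ (b : Cube m) (i : Fin m), b i = a b (f i)) ∧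
    (∀ b ∈ Set.range a, ∀ i : Fin n, (∀ j, f j ≠ i) → b i = s i)

theorem isCubeMap_id (m : ℕ) : IsCubeMap (id : Cube m → Cube m) := by
  refine ⟨id, fun _ => false, fun _ _ h => h, fun _ _ => rfl, ?_⟩
  intro b _ i hi
  exact absurd rfl (hi i)

theorem IsCubeMap.comp {m n k : ℕ} {a : Cube m → Cube n} {b : Cube n → Cube k}
    (ha : IsCubeMap a) (hb : IsCubeMap b) : IsCubeMap (b ∘ a) := by
  classical
  obtain ⟨f₁, s₁, hf₁inj, hf₁, hs₁⟩ := ha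
  obtain ⟨f₂, s₂, hf₂inj, hf₂, hs₂⟩ := hb
  refine ⟨f₂ ∘ f₁, fun i => if h : ∃ j, f₂ j = i then s₁ h.choose else s₂ i,
    hf₂inj.comp hf₁inj, ?_, ?_⟩
  · intro c i
    calc c i = a c (f₁ i) := hf₁ c i
    _ = b (a c) (f₂ (f₁ i)) := hf₂ (a c) (f₁ i)
  · rintro d ⟨c, rfl⟩ i hi
    dsimp only
    by_cases h : ∃ j, f₂ j = i
    · rw [dif_pos h]
      have h1 : a c h.choose = (b ∘ a) c (f₂ h.choose) := hf₂ (a c) h.choose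
      rw [h.choose_spec] at h1
      rw [← h1]
      refine hs₁ _ ⟨c, rfl⟩ _ ?_
      intro j hj
      exact hi j (by rw [Function.comp_apply, hj, h.choose_spec])
    · rw [dif_neg h]
      exact hs₂ _ ⟨a c, rfl⟩ i (fun j hj => h ⟨j, hj⟩)

/-- The hom set of the cube category. -/
def CubeHom (m n : ℕ) := {a : Cube m → Cube n // IsCubeMap a}

/-- Objects of the cube category `Cb` are the combinatorial `n`-cubes. -/
structure CubeCat where
  n : ℕ

/-- The object of `Cb` corresponding to the combinatorial `n`-cube. -/
def cubeObj (n : ℕ) : CubeCat := ⟨n⟩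

instance : Category CubeCat where
  Hom A B := CubeHom A.n B.n
  id A := ⟨_root_.id, isCubeMap_id A.n⟩
  comp f g := ⟨g.1 ∘ f.1, f.2.comp g.2⟩

noncomputable instance (A B : CubeCat) : Fintype (A ⟶ B) := by
  classical
  exact Subtype.fintype _

/-- A cubical complex is a contravariant functor from the cube category to `Set`. -/
abbrev CubicalComplex := CubeCatᵒᵖ ⥤ Type

/-- `|f(∅)|`: the number of `1`s in the image corner of a map from the `0`-cube. -/
def cubeWeight {n : ℕ} (f : cubeObj 0 ⟶ cubeObj (n + 1)) : ℕ :=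
  (@Finset.filter _ (fun i : Fin (n + 1) => f.1 (fun j : Fin 0 => j.elim0) i = true)
    (fun _ => instDecidableEqBool _ _) Finset.univ).card

/-- The alternating sum over the corners of an `(n+1)`-cell, i.e. the relation
`∑_{f ∈ Hom(C₀, C_{n+1})} (-1)^{|f(∅)|} · X(fᵒᵖ)(c)`. -/
noncomputable def relationElt (X : CubicalComplex) (n : ℕ)
    (c : X.obj (op (cubeObj (n + 1)))) :
    FreeAbelianGroup (X.obj (op (cubeObj 0))) :=
  ∑ f : cubeObj 0 ⟶ cubeObj (n + 1),
    ((-1 : ℤ) ^ cubeWeight f) • FreeAbelianGroup.of (X.map f.op c)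

/-- The subgroup of relations of the rank `n` finite type group. -/
noncomputable def relSubgroup (X : CubicalComplex) (n : ℕ) :
    AddSubgroup (FreeAbelianGroup (X.obj (op (cubeObj 0)))) :=
  AddSubgroup.closure (Set.range (relationElt X n))

/-- The rank `n` finite type group `Uₙ(X)` of a cubical complex `X`: generated by the
`0`-cells, subject to the alternating-corner-sum relations of the `(n+1)`-cells. -/
noncomputable def UGroup (X : CubicalComplex) (n : ℕ) : Type :=
  FreeAbelianGroup (X.obj (op (cubeObj 0))) ⧸ relSubgroup X n

noncomputable instance (X : CubicalComplex) (n : ℕ) : AddCommGroup (UGroup X n) := by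
  unfold UGroup; infer_instance

/-- The generator of `Uₙ(X)` corresponding to a `0`-cell. -/
noncomputable def mkU (X : CubicalComplex) (n : ℕ) (x : X.obj (op (cubeObj 0))) : UGroup X n :=
  QuotientAddGroup.mk (FreeAbelianGroup.of x)
/-- A diagram category structure on a category `C` equipped with a functor `F` to the category
of finite types: `F` is faithful, takes values in injective maps (so it is a functor to `Inj`),
every subset of `F a` is realized as the image of some arrow into `a` (subdiagrams exist), and
any two arrows into `a` with the same image differ by an isomorphism. -/
structure IsDiagramCat (C : Type) [SmallCategory C] (F : C ⥤ FintypeCat) : Prop where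
  faithful : ∀ {a b : C} (f g : a ⟶ b), F.map f = F.map g → f = g
  inj : ∀ {a b : C} (f : a ⟶ b), Function.Injective (F.map f)
  sub : ∀ (a : C) (S : Set (F.obj a)), ∃ (b : C) (f : b ⟶ a), Set.range (F.map f) = S
  unique_sub : ∀ {a b₁ b₂ : C} (f₁ : b₁ ⟶ a) (f₂ : b₂ ⟶ a),
    Set.range (F.map f₁) = Set.range (F.map f₂) → ∃ g : b₁ ≅ b₂, f₁ = g.hom ≫ f₂

/-- A representative of an `n`-cell of the cubical complex `D^□` of a diagram category:
a pair `(g : p → q, φ)` where `φ` is a bijective labelling of `F q ∖ im (F g)` by `[n]`.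
Such a pair is faithfully encoded (up to the isomorphism relation below) by the object `q`
together with the injection `lab = φ⁻¹ : [n] → F q`; the domain `p` of `g` is the subdiagram
of `q` on the complement of the range of `lab`. -/
structure PreCell (C : Type) [SmallCategory C] (F : C ⥤ FintypeCat) (n : ℕ) where
  q : C
  lab : Fin n → F.obj q
  inj : Function.Injective lab

/-- Isomorphism of pairs: an isomorphism of the underlying objects commuting with the
labellings (the component on the domains `p` exists automatically). -/
def CellRel (C : Type) [SmallCategory C] (F : C ⥤ FintypeCat) (n : ℕ)
    (c₁ c₂ : PreCell C F n) : Prop :=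
  ∃ h : c₁.q ≅ c₂.q, ∀ i, F.map h.hom (c₁.lab i) = c₂.lab i

/-- The set of `n`-cells of `D^□`: isomorphism classes of pairs `(g, φ)`. -/
def DCell (C : Type) [SmallCategory C] (F : C ⥤ FintypeCat) (n : ℕ) :=
  Quot (CellRel C F n)

/-- The `0`-cells of `D^□` are identified with isomorphism classes of objects of `D`. -/
def objCell (C : Type) [SmallCategory C] (F : C ⥤ FintypeCat) (a : C) : DCell C F 0 :=
  Quot.mk _ ⟨a, fun i => i.elim0, fun i => i.elim0⟩

/-- Given an `n`-cell with label injection `lab` and a cube map witness `(f, s)`, the subset of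
`F q` kept after deleting the labelled elements whose label lies outside the image of `f`
and has `s`-value `0`; this is `F(q) ∖ φ⁻¹s⁻¹{0}`. -/
def KeepSet {C : Type} [SmallCategory C] {F : C ⥤ FintypeCat} {m n : ℕ}
    (c : PreCell C F n) (f : Fin m → Fin n) (s : Fin n → Bool) : Set (F.obj c.q) :=
  (c.lab '' {ℓ : Fin n | (∀ j, f j ≠ ℓ) ∧ s ℓ = false})ᶜ

/-- A realization of the cubical complex `D^□` of a diagram category: a cubical complex whose
`n`-cells are the isomorphism classes of pairs `(g, φ)` and whose action along a cube map
`a : C_m → C_n` with associated pair `(f, s)` is given by the formula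
`D^□(aᵒᵖ)(g, φ) = (ι_{(im F(g) ∪ φ⁻¹s⁻¹{1}, F(q) ∖ φ⁻¹s⁻¹{0})}, f⁻¹ ∘ φ|_{φ⁻¹(im f)} ∘ F(ι_{F(q) ∖ φ⁻¹s⁻¹{0}}))`:
in terms of the label injections, the new cell is carried by the subdiagram `q'` of `q` on
`F(q) ∖ φ⁻¹s⁻¹{0}` (with inclusion `ι`), with `F(ι)(lab' i) = lab (f i)` for all `i`. -/
structure BoxComplex (C : Type) [SmallCategory C] (F : C ⥤ FintypeCat) where
  X : CubicalComplex
  cells : ∀ n : ℕ, X.obj (op (cubeObj n)) ≃ DCell C F n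
  map_spec : ∀ {m n : ℕ} (a : cubeObj m ⟶ cubeObj n) (f : Fin m → Fin n) (s : Fin n → Bool),
    Function.Injective f →
    (∀ (b : Cube m) (i : Fin m), b i = a.1 b (f i)) →
    (∀ b ∈ Set.range a.1, ∀ i : Fin n, (∀ j, f j ≠ i) → b i = s i) →
    ∀ (c : PreCell C F n) (c' : PreCell C F m) (ι : c'.q ⟶ c.q),
      Set.range (F.map ι) = KeepSet c f s →
      (∀ i, F.map ι (c'.lab i) = c.lab (f i)) →
      cells m (X.map a.op ((cells n).symm (Quot.mk _ c))) = Quot.mk _ c'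

def topCorner (n : ℕ) : cubeObj 0 ⟶ cubeObj (n + 1) :=
  ⟨fun _ _ => true, fun j => j.elim0, fun _ => true, fun a _ _ => a.elim0,
    fun _ i => i.elim0, fun b hb i _ => by obtain ⟨x, rfl⟩ := hb; rfl⟩

lemma cubeWeight_topCorner (n : ℕ) : cubeWeight (topCorner n) = n + 1 := by
  simp [cubeWeight, topCorner]

lemma exists_eq_false_of_ne_topCorner {n : ℕ} {f : cubeObj 0 ⟶ cubeObj (n + 1)}
    (hf : f ≠ topCorner n) : ∃ i, f.1 (fun j => j.elim0) i = false := by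
  by_contra! h
  refine hf (Subtype.ext (funext fun b => funext fun i => ?_))
  rw [show b = fun j => j.elim0 from funext fun j => j.elim0]
  simpa [topCorner] using h i

lemma UGroup.closure_range_mkU (X : CubicalComplex) (n : ℕ) :
    AddSubgroup.closure (Set.range (mkU X n)) = ⊤ := by
  rw [eq_top_iff]
  rintro u -
  obtain ⟨z, rfl⟩ := QuotientAddGroup.mk'_surjective (relSubgroup X n) u
  induction z using FreeAbelianGroup.induction_on with
  | zero => exact zero_mem _
  | of x => exact AddSubgroup.subset_closure ⟨x, rfl⟩
  | neg x hx => rw [map_neg]; exact neg_mem hx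
  | add x y hx hy => rw [map_add]; exact add_mem hx hy

lemma sum_corners_mkU_eq_zero (X : CubicalComplex) (n : ℕ) (c : X.obj (op (cubeObj (n + 1)))) :
    ∑ f : cubeObj 0 ⟶ cubeObj (n + 1), ((-1 : ℤ) ^ cubeWeight f) • mkU X n (X.map f.op c) = 0 := by
  have h : (QuotientAddGroup.mk' (relSubgroup X n)) (relationElt X n c) = 0 :=
    (QuotientAddGroup.eq_zero_iff _).mpr (AddSubgroup.subset_closure ⟨c, rfl⟩)
  simp only [relationElt, map_sum, map_zsmul] at h
  exact h

lemma mkU_topCorner_mem {X : CubicalComplex} {n : ℕ} (c : X.obj (op (cubeObj (n + 1))))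
    (H : AddSubgroup (UGroup X n)) (h : ∀ f ≠ topCorner n, mkU X n (X.map f.op c) ∈ H) :
    mkU X n (X.map (topCorner n).op c) ∈ H := by
  classical
  have hrel := sum_corners_mkU_eq_zero X n c
  rw [← Finset.add_sum_erase _ _ (Finset.mem_univ (topCorner n)), cubeWeight_topCorner] at hrel
  have hrest : ∑ f ∈ Finset.univ.erase (topCorner n),
      ((-1 : ℤ) ^ cubeWeight f) • mkU X n (X.map f.op c) ∈ H :=
    sum_mem fun f hf => zsmul_mem (h f (Finset.ne_of_mem_erase hf)) _
  have htop : ((-1 : ℤ) ^ (n + 1)) • mkU X n (X.map (topCorner n).op c) ∈ H := by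
    rw [eq_neg_of_add_eq_zero_left hrel]
    exact neg_mem hrest
  rcases neg_one_pow_eq_or ℤ (n + 1) with hsign | hsign <;>
    simpa only [hsign, one_smul, neg_smul, neg_mem_iff] using htop

section DiagramCat

variable {C : Type} [SmallCategory C] {F : C ⥤ FintypeCat}

lemma IsDiagramCat.objCell_eq_of_range_eq_univ (hF : IsDiagramCat C F) {b q : C} (ι : b ⟶ q)
    (hι : Set.range (F.map ι) = Set.univ) : objCell C F b = objCell C F q := by
  obtain ⟨g, -⟩ := hF.unique_sub ι (𝟙 q) (by rw [hι, F.map_id]; exact Set.range_id.symm)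
  exact Quot.sound ⟨g, fun i => i.elim0⟩

lemma IsDiagramCat.card_lt_of_notMem_range (hF : IsDiagramCat C F) {b q : C} (ι : b ⟶ q)
    {x : F.obj q} (hx : x ∉ Set.range (F.map ι)) : Nat.card (F.obj b) < Nat.card (F.obj q) := by
  have := Fintype.ofFinite (F.obj b)
  have := Fintype.ofFinite (F.obj q)
  simpa only [Nat.card_eq_fintype_card] using
    Fintype.card_lt_of_injective_of_notMem _ (hF.inj ι) hx

lemma quot_mk_eq_objCell (c : PreCell C F 0) : Quot.mk (CellRel C F 0) c = objCell C F c.q :=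
  Quot.sound ⟨Iso.refl c.q, fun i => i.elim0⟩

noncomputable def PreCell.ofLE {n : ℕ} (q : C) (h : n ≤ Nat.card (F.obj q)) : PreCell C F n :=
  ⟨q, (Finite.equivFin (F.obj q)).symm ∘ Fin.castLE h,
    (Finite.equivFin (F.obj q)).symm.injective.comp (Fin.castLE_injective h)⟩

lemma keepSet_topCorner {n : ℕ} (c : PreCell C F (n + 1)) :
    KeepSet c (fun j : Fin 0 => j.elim0) ((topCorner n).1 fun j => j.elim0) = Set.univ := by
  simp [KeepSet, topCorner]

lemma BoxComplex.map_corner (B : BoxComplex C F) {n : ℕ} (v : cubeObj 0 ⟶ cubeObj n)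
    (c : PreCell C F n) {b : C} (ι : b ⟶ c.q)
    (hι : Set.range (F.map ι) = KeepSet c (fun j : Fin 0 => j.elim0) (v.1 fun j => j.elim0)) :
    B.X.map v.op ((B.cells n).symm (Quot.mk _ c)) = (B.cells 0).symm (objCell C F b) :=
  (Equiv.eq_symm_apply _).mpr <| B.map_spec v _ _ (fun a _ _ => a.elim0) (fun _ i => i.elim0)
    (by rintro _ ⟨b₀, rfl⟩ i -; rw [show b₀ = fun j => j.elim0 from funext fun j => j.elim0])
    c ⟨b, fun i => i.elim0, fun i => i.elim0⟩ ι hι (fun i => i.elim0)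

variable (hF : IsDiagramCat C F) (B : BoxComplex C F) {X : CubicalComplex} (ε : B.X ⟶ X)
include hF

lemma mkU_objCell_mem_of_forall_card_lt {n : ℕ} (H : AddSubgroup (UGroup X n)) {q : C}
    (hq : n < Nat.card (F.obj q))
    (ih : ∀ b : C, Nat.card (F.obj b) < Nat.card (F.obj q) →
      mkU X n (ε.app _ ((B.cells 0).symm (objCell C F b))) ∈ H) :
    mkU X n (ε.app _ ((B.cells 0).symm (objCell C F q))) ∈ H := by
  let c : PreCell C F (n + 1) := PreCell.ofLE q hq
  have corner : ∀ v : cubeObj 0 ⟶ cubeObj (n + 1), ∃ (b : C) (ι : b ⟶ q),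
      Set.range (F.map ι) = KeepSet c (fun j : Fin 0 => j.elim0) (v.1 fun j => j.elim0) ∧
      X.map v.op (ε.app _ ((B.cells _).symm (Quot.mk _ c))) =
        ε.app _ ((B.cells 0).symm (objCell C F b)) := by
    intro v
    obtain ⟨b, ι, hι⟩ := hF.sub q (KeepSet c (fun j : Fin 0 => j.elim0) (v.1 fun j => j.elim0))
    exact ⟨b, ι, hι, by rw [← NatTrans.naturality_apply, B.map_corner v c ι hι]⟩
  obtain ⟨b, ι, hι, htop⟩ := corner (topCorner n)
  rw [← hF.objCell_eq_of_range_eq_univ ι (hι.trans (keepSet_topCorner c)), ← htop]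
  refine mkU_topCorner_mem _ H fun v hv => ?_
  obtain ⟨b, ι, hι, hv'⟩ := corner v
  obtain ⟨ℓ, hℓ⟩ := exists_eq_false_of_ne_topCorner hv
  have hdel : c.lab ℓ ∉ Set.range (F.map ι) :=
    hι ▸ fun hmem => hmem ⟨ℓ, ⟨fun j => j.elim0, hℓ⟩, rfl⟩
  exact hv' ▸ ih b (hF.card_lt_of_notMem_range ι hdel)

lemma mkU_objCell_mem_closure_small (n : ℕ) (q : C) :
    mkU X n (ε.app _ ((B.cells 0).symm (objCell C F q))) ∈
      AddSubgroup.closure {u : UGroup X n | ∃ a : C, Nat.card (F.obj a) ≤ n ∧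
        u = mkU X n (ε.app (op (cubeObj 0)) ((B.cells 0).symm (objCell C F a)))} := by
  induction hk : Nat.card (F.obj q) using Nat.strong_induction_on generalizing q with
  | _ k ih =>
  subst hk
  rcases le_or_gt (Nat.card (F.obj q)) n with hle | hgt
  · exact AddSubgroup.subset_closure ⟨q, hle, rfl⟩
  · exact mkU_objCell_mem_of_forall_card_lt hF B ε _ hgt fun b hb => ih _ hb b rfl

end DiagramCat

/-- A diagram system for a cubical complex `X`: a diagram category `(C, F)` together with a
realization `B` of its cubical complex `D^□` and a natural transformation `ε : D^□ ⟶ X`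
whose `0`-component is surjective.  **Statement 2.** If `X` admits a diagram system, then for
every `n ≥ 0` the group `Uₙ(X)` is generated by the elements `ε₀(a)` where `a` ranges over
(isomorphism classes of) objects of the diagram category of order `|a| = |F(a)| ≤ n`. -/
theorem UGroup_generated_by_small_diagrams (C : Type) [SmallCategory C] (F : C ⥤ FintypeCat)
    (hF : IsDiagramCat C F) (B : BoxComplex C F) (X : CubicalComplex) (ε : B.X ⟶ X)
    (hsurj : Function.Surjective (ε.app (op (cubeObj 0)))) (n : ℕ) :
    AddSubgroup.closure
      {u : UGroup X n | ∃ a : C, Nat.card (F.obj a) ≤ n ∧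
        u = mkU X n (ε.app (op (cubeObj 0)) ((B.cells 0).symm (objCell C F a)))} = ⊤ := by
  rw [eq_top_iff, ← UGroup.closure_range_mkU, AddSubgroup.closure_le]
  rintro _ ⟨x, rfl⟩
  obtain ⟨y, rfl⟩ := hsurj x
  obtain ⟨c, hc⟩ := Quot.exists_rep (B.cells 0 y)
  rw [← (B.cells 0).symm_apply_apply y, ← hc, quot_mk_eq_objCell]
  exact mkU_objCell_mem_closure_small hF B ε n c.q
end

section
/- Let D be a diagram category and let π : D_0^□ → S be a surjective function onto a set S. Define a cubical complex X by X_0 = S, X_n = D_n^□ for n > 0, and, for a cube map a : C_0 → C_n, X(a^op) = π ∘ D^□(a^op) (with X(a^op) = D^□(a^op) when the target cell dimension is positive). Then for every n ≥ 0 there is an isomorphism U_n(X) ≅ Ab(D_{≤n}) / R, where R is the subgroup of Ab(D_{≤n}) generated by all elements s(x) − s(y) with x, y ∈ D_0^□ satisfying π(x) = π(y). -/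
open CategoryTheory Opposite
attribute [local instance] FintypeCat.fintype

/-- Isomorphism classes of objects of a category. -/
def ObjClass (C : Type) [SmallCategory C] :=
  Quot (fun a b : C => Nonempty (a ≅ b))

theorem card_eq_of_iso {C : Type} [SmallCategory C] (F : C ⥤ FintypeCat) {a b : C}
    (h : a ≅ b) : Fintype.card (F.obj a) = Fintype.card (F.obj b) :=
  Fintype.card_congr (FintypeCat.equivEquivIso.symm (F.mapIso h))

/-- The order `|a| = |F(a)|` of an isomorphism class of objects of a diagram category. -/
noncomputable def orderC (C : Type) [SmallCategory C] (F : C ⥤ FintypeCat) :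
    ObjClass C → ℕ :=
  Quot.lift (fun a => Fintype.card (F.obj a)) (fun _ _ h => card_eq_of_iso F h.some)

/-- `Ab(D_{≤n})`: the free abelian group on isomorphism classes of objects of order at
most `n`. -/
noncomputable def AbLe (C : Type) [SmallCategory C] (F : C ⥤ FintypeCat) (n : ℕ) :=
  FreeAbelianGroup {c : ObjClass C // orderC C F c ≤ n}

noncomputable instance (C : Type) [SmallCategory C] (F : C ⥤ FintypeCat) (n : ℕ) :
    AddCommGroup (AbLe C F n) := by
  unfold AbLe; infer_instance

variable {C : Type} [SmallCategory C] {F : C ⥤ FintypeCat}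

/-- A chosen subdiagram `a_S` of `a` corresponding to `S ⊆ F(a)`. -/
noncomputable def IsDiagramCat.subObj (hF : IsDiagramCat C F) (a : C) (S : Set (F.obj a)) :
    C :=
  (hF.sub a S).choose

/-- The chosen subdiagram inclusion `ι_S : a_S → a`. -/
noncomputable def IsDiagramCat.subIncl (hF : IsDiagramCat C F) (a : C) (S : Set (F.obj a)) :
    hF.subObj a S ⟶ a :=
  (hF.sub a S).choose_spec.choose

theorem IsDiagramCat.range_subIncl (hF : IsDiagramCat C F) (a : C) (S : Set (F.obj a)) :
    Set.range (F.map (hF.subIncl a S)) = S :=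
  (hF.sub a S).choose_spec.choose_spec

theorem IsDiagramCat.card_subObj (hF : IsDiagramCat C F) (a : C) (S : Finset (F.obj a)) :
    Fintype.card (F.obj (hF.subObj a (S : Set (F.obj a)))) = S.card := by
  classical
  have e1 := Equiv.ofInjective _ (hF.inj (hF.subIncl a (S : Set (F.obj a))))
  have e2 := Equiv.setCongr (hF.range_subIncl a (S : Set (F.obj a)))
  rw [Fintype.card_congr (e1.trans e2)]
  simp
/-- The isomorphism class of the subdiagram `a_S`, as a generator of `Ab(D_{≤n})`, for
`S ⊆ F(a)` with `|S| ≤ n`. -/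
noncomputable def IsDiagramCat.subClsLe (hF : IsDiagramCat C F) (n : ℕ) (a : C)
    (S : Finset (F.obj a)) (h : S.card ≤ n) : {c : ObjClass C // orderC C F c ≤ n} :=
  ⟨Quot.mk _ (hF.subObj a (S : Set (F.obj a))),
    le_of_eq_of_le (hF.card_subObj a S) h⟩

/-- `s` on a generator: `s(a) = ∑_{S ⊆ F(a), |S| ≤ n} a_S ∈ Ab(D_{≤n})`. -/
noncomputable def sFormula (hF : IsDiagramCat C F) (n : ℕ) (a : C) : AbLe C F n :=
  ∑ S : Finset (F.obj a),
    if h : S.card ≤ n then FreeAbelianGroup.of (hF.subClsLe n a S h) else 0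

open scoped Classical in
/-- `s₋` on a generator: `s₋(a) = ∑_{S ⊆ F(a)} (-1)^{|F(a) ∖ S|} · a_S ∈ Uₙ(D^□)`. -/
noncomputable def sInvFormula (hF : IsDiagramCat C F) (B : BoxComplex C F) (n : ℕ) (a : C) :
    UGroup B.X n :=
  ∑ S : Finset (F.obj a),
    ((-1 : ℤ) ^ (Sᶜ.card)) •
      mkU B.X n ((B.cells 0).symm (objCell C F (hF.subObj a (S : Set (F.obj a)))))

/-!
The group `Uₙ(X)` is generated by `S` subject to one relation per `(n+1)`-cell of `D^□`: the
alternating sum over its corners. The corners of a cell `(g : p → q, φ)` are the subdiagrams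
`q_u` with `im F(g) ⊆ u ⊆ F(q)`, so a relation is an alternating sum over an interval `[s, t]`
of subsets with `|t \ s| = n + 1`.

Since `s(a)` is the zeta transform of `T ↦ a_T` truncated at order `n`, the alternating sum of
`s` over such an interval only sees subsets `T ⊇ t \ s`, which have more than `n` elements; so
`s` kills the relations and induces `Uₙ(X) → Ab(D_{≤n}) / R`. In the other direction, send a
class `[q]` of order `≤ n` to its Möbius transform `∑_T (-1)^{|F(q) \ T|} π(q_T)`. The cube
relations force this Möbius transform to vanish on objects of order `> n`, hence Möbius inversion
maps `s(a)` back to `π(a)` and the map kills `R`. Möbius inversion in both directions shows that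
the two maps are mutually inverse.
-/

namespace Finset

theorem sum_map_univ_eq_sum_powerset {α β M : Type*} [Fintype α] [AddCommMonoid M] (e : α ↪ β)
    (g : Finset β → M) : ∑ Q : Finset α, g (Q.map e) = ∑ T ∈ (univ.map e).powerset, g T := by
  have h : (univ.map e).powerset = univ.map (mapEmbedding e).toEmbedding := by
    ext T
    simp only [mem_powerset, subset_map_iff, mem_map, mem_univ, true_and, subset_univ]
    exact exists_congr fun _ => eq_comm
  rw [h, sum_map]
  rfl

theorem exists_fin_embedding_map_univ {α : Type*} {L : Finset α} {k : ℕ} (h : L.card = k) :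
    ∃ e : Fin k ↪ α, univ.map e = L := by
  refine ⟨(L.equivFinOfCardEq h).symm.toEmbedding.trans (Function.Embedding.subtype _), ?_⟩
  ext x
  simp only [mem_map, mem_univ, true_and, Function.Embedding.trans_apply,
    Equiv.coe_toEmbedding, Function.Embedding.subtype_apply]
  exact ⟨fun ⟨i, hi⟩ => hi ▸ ((L.equivFinOfCardEq h).symm i).2,
    fun hx => ⟨L.equivFinOfCardEq h ⟨x, hx⟩, by simp⟩⟩

theorem card_sdiff_map_of_map_univ {α β : Type*} [Fintype α] [DecidableEq α] [DecidableEq β]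
    {e : α ↪ β} {t : Finset β} (h : univ.map e = t) (u : Finset α) :
    (t \ u.map e).card = (univ \ u).card := by
  rw [← h, ← map_sdiff, card_map]

theorem neg_one_pow_card_compl {α : Type*} [Fintype α] [DecidableEq α] (s : Finset α) :
    (-1 : ℤ) ^ sᶜ.card = (-1) ^ Fintype.card α * (-1) ^ s.card := by
  rw [← card_compl_add_card s, pow_add, mul_assoc, ← pow_add, Even.neg_one_pow ⟨_, rfl⟩, mul_one]

theorem sum_Icc_sdiff_map_univ {α ι M : Type*} [Fintype α] [DecidableEq α] [Fintype ι]
    [DecidableEq ι] [AddCommMonoid M] (e : ι ↪ α) (g : Finset α → M) :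
    ∑ u ∈ Icc (univ \ univ.map e) univ, g u = ∑ J : Finset ι, g (univ \ J.map e) := by
  symm
  refine sum_nbij' (fun J => univ \ J.map e) (fun u => univ.filter (e · ∉ u)) ?_ ?_ ?_ ?_
    fun _ _ => rfl
  · intro J _
    rw [mem_Icc]
    exact ⟨sdiff_subset_sdiff subset_rfl (map_subset_map.2 (subset_univ J)), subset_univ _⟩
  · simp
  · intro J _
    ext i
    simp
  · intro u hu
    simp only [mem_Icc, subset_iff, mem_sdiff, mem_univ, mem_map, true_and] at hu
    ext x
    simp only [mem_sdiff, mem_univ, mem_map, mem_filter, true_and, not_exists, not_and]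
    grind

section

variable {α G : Type*} [DecidableEq α] [AddCommGroup G]

theorem sum_powerset_sdiff_neg_one_pow_card {s t : Finset α} (h : s ⊆ t) :
    ∑ w ∈ (t \ s).powerset, (-1 : ℤ) ^ w.card = if s = t then 1 else 0 := by
  rw [sum_powerset_neg_one_pow_card]
  exact if_congr ⟨fun hts => h.antisymm (sdiff_eq_empty_iff_subset.1 hts), fun hst => by
    rw [hst, sdiff_self, bot_eq_empty]⟩ rfl rfl

theorem sum_Icc_neg_one_pow_card_sdiff_right {s t : Finset α} (h : s ⊆ t) :
    ∑ u ∈ Icc s t, (-1 : ℤ) ^ (t \ u).card = if s = t then 1 else 0 := by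
  rw [← sum_powerset_sdiff_neg_one_pow_card h]
  refine sum_nbij' (t \ ·) (t \ ·) ?_ ?_ ?_ ?_ (fun _ _ => rfl) <;>
    intro u hu <;> simp only [mem_Icc, mem_powerset] at hu ⊢
  · exact sdiff_subset_sdiff subset_rfl hu.1
  · exact ⟨fun x hx => mem_sdiff.2 ⟨h hx, fun hx' => (mem_sdiff.1 (hu hx')).2 hx⟩, sdiff_subset⟩
  · exact sdiff_sdiff_eq_self hu.2
  · exact sdiff_sdiff_eq_self (hu.trans sdiff_subset)

theorem sum_Icc_neg_one_pow_card_sdiff_left {s t : Finset α} (h : s ⊆ t) :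
    ∑ u ∈ Icc s t, (-1 : ℤ) ^ (u \ s).card = if s = t then 1 else 0 := by
  rw [← sum_powerset_sdiff_neg_one_pow_card h]
  refine sum_nbij' (· \ s) (s ∪ ·) ?_ ?_ ?_ ?_ (fun _ _ => rfl) <;>
    intro u hu <;> simp only [mem_Icc, mem_powerset] at hu ⊢
  · exact sdiff_subset_sdiff hu.2 subset_rfl
  · exact ⟨subset_union_left, union_subset h (hu.trans sdiff_subset)⟩
  · exact union_sdiff_of_subset hu.1
  · exact union_sdiff_cancel_left (disjoint_of_subset_right hu disjoint_sdiff)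

theorem sum_Icc_neg_one_pow_smul_sum_powerset {s t : Finset α} (h : s ⊆ t)
    (f : Finset α → G) :
    ∑ u ∈ Icc s t, (-1 : ℤ) ^ (t \ u).card • ∑ v ∈ u.powerset, f v =
      ∑ v ∈ t.powerset with t \ s ⊆ v, f v := by
  simp_rw [smul_sum]
  rw [sum_comm' (t' := t.powerset) (s' := fun v => Icc (s ∪ v) t), sum_filter]
  · refine sum_congr rfl fun v hv => ?_
    have hvt := mem_powerset.1 hv
    rw [← sum_smul, sum_Icc_neg_one_pow_card_sdiff_right (union_subset h hvt), ite_smul,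
      one_smul, zero_smul]
    refine if_congr ⟨fun hsv => hsv ▸ union_sdiff_left s v ▸ sdiff_subset, fun hts => ?_⟩ rfl rfl
    exact (union_subset h hvt).antisymm fun x hx => by
      by_cases hxs : x ∈ s
      · exact mem_union_left _ hxs
      · exact mem_union_right _ (hts (mem_sdiff.2 ⟨hx, hxs⟩))
  · intro u v
    simp only [mem_Icc, mem_powerset, union_subset_iff]
    exact ⟨fun ⟨⟨hsu, hut⟩, hvu⟩ => ⟨⟨⟨hsu, hvu⟩, hut⟩, hvu.trans hut⟩,
      fun ⟨⟨⟨hsu, hvu⟩, hut⟩, _⟩ => ⟨⟨hsu, hut⟩, hvu⟩⟩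

theorem sum_powerset_neg_one_pow_smul_sum_powerset (t : Finset α) (f : Finset α → G) :
    ∑ u ∈ t.powerset, (-1 : ℤ) ^ (t \ u).card • ∑ v ∈ u.powerset, f v = f t := by
  have hIcc : Icc ∅ t = t.powerset := by ext; simp
  rw [← hIcc, sum_Icc_neg_one_pow_smul_sum_powerset (empty_subset t),
    sdiff_empty, filter_congr (p := (t ⊆ ·)) (q := (· = t))
      fun v hv => ⟨fun htv => ((mem_powerset.1 hv).antisymm htv), fun hvt => hvt.ge⟩,
    filter_eq', if_pos (mem_powerset_self t), sum_singleton]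

theorem sum_powerset_sum_powerset_neg_one_pow_smul (t : Finset α) (f : Finset α → G) :
    ∑ u ∈ t.powerset, ∑ v ∈ u.powerset, (-1 : ℤ) ^ (u \ v).card • f v = f t := by
  rw [sum_comm' (t' := t.powerset) (s' := fun v => Icc v t)]
  · rw [sum_eq_single_of_mem t (mem_powerset_self t)]
    · rw [← sum_smul, sum_Icc_neg_one_pow_card_sdiff_left subset_rfl, if_pos rfl, one_smul]
    · intro v hv hvt
      rw [← sum_smul, sum_Icc_neg_one_pow_card_sdiff_left (mem_powerset.1 hv), if_neg hvt,
        zero_smul]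
  · intro u v
    simp only [mem_Icc, mem_powerset]
    exact ⟨fun ⟨hut, hvu⟩ => ⟨⟨hvu, hut⟩, hvu.trans hut⟩, fun ⟨⟨hvu, hut⟩, _⟩ => ⟨hut, hvu⟩⟩

/-- Fix `L ⊆ t` with `n + 1` elements and group the subsets `u` of `t` by `u \ L`. -/
theorem sum_powerset_neg_one_pow_smul_eq_zero {n : ℕ} {f : Finset α → G}
    (hf : ∀ s t : Finset α, s ⊆ t → (t \ s).card = n + 1 →
      ∑ u ∈ Icc s t, (-1 : ℤ) ^ (t \ u).card • f u = 0)
    {t : Finset α} (ht : n < t.card) :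
    ∑ u ∈ t.powerset, (-1 : ℤ) ^ (t \ u).card • f u = 0 := by
  obtain ⟨L, hLt, hL⟩ := exists_subset_card_eq (show n + 1 ≤ t.card from ht)
  rw [← sum_fiberwise_of_maps_to (g := (· \ L)) (t := (t \ L).powerset)
    fun u hu => mem_powerset.2 (sdiff_subset_sdiff (mem_powerset.1 hu) subset_rfl)]
  refine sum_eq_zero fun M hM => ?_
  have hMt : M ∪ L ⊆ t := union_subset ((mem_powerset.1 hM).trans sdiff_subset) hLt
  have hfiber : {u ∈ t.powerset | u \ L = M} = Icc M (M ∪ L) := by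
    have hM' := mem_powerset.1 hM
    ext u
    simp only [mem_filter, mem_powerset, mem_Icc, Finset.ext_iff, subset_iff, mem_sdiff,
      mem_union] at hM' hLt ⊢
    grind
  have hsign : ∀ u ∈ Icc M (M ∪ L),
      (-1 : ℤ) ^ (t \ u).card = (-1) ^ (t \ (M ∪ L)).card * (-1) ^ ((M ∪ L) \ u).card := by
    intro u hu
    have hu' := (mem_Icc.1 hu).2
    have := card_sdiff_add_card_eq_card hu'
    have := card_sdiff_add_card_eq_card hMt
    have := card_sdiff_add_card_eq_card (hu'.trans hMt)
    rw [← pow_add]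
    congr 1
    omega
  have hdisj : Disjoint M L := disjoint_of_subset_left (mem_powerset.1 hM) sdiff_disjoint
  rw [hfiber, sum_congr rfl fun u hu => by rw [hsign u hu, mul_smul], ← smul_sum,
    hf M (M ∪ L) subset_union_left (by rw [union_sdiff_cancel_left hdisj, hL]), smul_zero]

end

end Finset

theorem isCubeMap_const {k : ℕ} (v : Cube k) : IsCubeMap (fun _ : Cube 0 => v) :=
  ⟨Fin.elim0, v, fun i => i.elim0, fun _ i => i.elim0, by rintro _ ⟨_, rfl⟩ _ _; rfl⟩

def cubeVertex {k : ℕ} (f : cubeObj 0 ⟶ cubeObj k) : Cube k := f.1 fun j => j.elim0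

def cubeVertexEquiv (k : ℕ) : (cubeObj 0 ⟶ cubeObj k) ≃ Cube k where
  toFun := cubeVertex
  invFun v := ⟨fun _ => v, isCubeMap_const v⟩
  left_inv f := Subtype.ext <| funext fun _ => congrArg f.1 <| funext fun j => j.elim0
  right_inv _ := rfl

def Cube.zerosEquiv (k : ℕ) : Cube k ≃ Finset (Fin k) where
  toFun v := {i | v i = false}
  invFun J i := decide (i ∉ J)
  left_inv v := funext fun i => by cases h : v i <;> simp [h]
  right_inv J := by ext; simp

theorem cubeWeight_eq_card_compl {k : ℕ} (f : cubeObj 0 ⟶ cubeObj (k + 1)) :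
    cubeWeight f = (Cube.zerosEquiv (k + 1) (cubeVertex f))ᶜ.card := by
  unfold cubeWeight
  congr 1
  ext i
  simp [Cube.zerosEquiv, cubeVertex]
  rfl

theorem objCell_eq_of_iso ⦃a b : C⦄ (h : Nonempty (a ≅ b)) : objCell C F a = objCell C F b :=
  Quot.sound ⟨h.some, fun i => i.elim0⟩

theorem objCell_surjective : Function.Surjective (objCell C F) :=
  Quot.ind fun pc => ⟨pc.q, Quot.sound ⟨Iso.refl pc.q, fun i => i.elim0⟩⟩

section

open Finset
open scoped Classical

namespace IsDiagramCat

variable (hF : IsDiagramCat C F)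

def mapEmb {a b : C} (f : a ⟶ b) : F.obj a ↪ F.obj b := ⟨F.map f, hF.inj f⟩

theorem subObj_map_iso {a b : C} (f : a ⟶ b) (T : Set (F.obj a)) :
    Nonempty (hF.subObj a T ≅ hF.subObj b (F.map f '' T)) := by
  refine ⟨(hF.unique_sub (hF.subIncl a T ≫ f) (hF.subIncl b _) ?_).choose⟩
  rw [hF.range_subIncl]
  conv_rhs => rw [← hF.range_subIncl a T]
  ext y
  simp

theorem subObj_univ_iso (a : C) : Nonempty (hF.subObj a Set.univ ≅ a) := by
  refine ⟨(hF.unique_sub (hF.subIncl a Set.univ) (𝟙 a) ?_).choose⟩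
  rw [hF.range_subIncl, F.map_id]
  exact Set.range_id.symm

theorem map_univ_mapEmb_subIncl (a : C) (K : Finset (F.obj a)) :
    univ.map (hF.mapEmb (hF.subIncl a ↑K)) = K := by
  apply coe_injective
  rw [coe_map, coe_univ, Set.image_univ]
  exact hF.range_subIncl a ↑K

theorem map_univ_mapEmb_iso {a b : C} (e : a ≅ b) : univ.map (hF.mapEmb e.hom) = univ :=
  map_univ_of_surjective (FintypeCat.equivEquivIso.symm (F.mapIso e)).surjective

/-- Reindexing along `a_Q ≅ b_{F(f)(Q)}`. -/
theorem sum_subObj_map {G H : Type*} [AddCommMonoid H] {v : C → G}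
    (hv : ∀ ⦃x y : C⦄, Nonempty (x ≅ y) → v x = v y) {a b : C} (f : a ⟶ b)
    (g : Finset (F.obj b) → G → H) :
    ∑ Q : Finset (F.obj a), g (Q.map (hF.mapEmb f)) (v (hF.subObj a ↑Q)) =
      ∑ T ∈ (univ.map (hF.mapEmb f)).powerset, g T (v (hF.subObj b ↑T)) := by
  rw [← sum_map_univ_eq_sum_powerset]
  refine sum_congr rfl fun Q _ => ?_
  rw [coe_map]
  exact congrArg _ (hv (hF.subObj_map_iso f ↑Q))

theorem sum_Icc_subObj {G : Type*} [AddCommGroup G] {v : C → G}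
    (hv : ∀ ⦃x y : C⦄, Nonempty (x ≅ y) → v x = v y) (q : C) (t : Finset (F.obj q))
    (s : Finset (F.obj (hF.subObj q ↑t))) :
    ∑ u ∈ Icc s univ, (-1 : ℤ) ^ (univ \ u).card • v (hF.subObj (hF.subObj q ↑t) ↑u) =
      ∑ u ∈ Icc (s.map (hF.mapEmb (hF.subIncl q ↑t))) t,
        (-1 : ℤ) ^ (t \ u).card • v (hF.subObj q ↑u) := by
  have h := hF.sum_subObj_map hv (hF.subIncl q ↑t) fun T x =>
    if s.map (hF.mapEmb (hF.subIncl q ↑t)) ⊆ T then (-1 : ℤ) ^ (t \ T).card • x else 0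
  rw [hF.map_univ_mapEmb_subIncl] at h
  rw [Icc_eq_filter_powerset, Icc_eq_filter_powerset, sum_filter, sum_filter, ← h, powerset_univ]
  refine sum_congr rfl fun u _ => ?_
  simp only [map_subset_map, card_sdiff_map_of_map_univ (hF.map_univ_mapEmb_subIncl q t)]

end IsDiagramCat

noncomputable def AbLe.ofObj (F : C ⥤ FintypeCat) (n : ℕ) (a : C) : AbLe C F n :=
  if h : Fintype.card (F.obj a) ≤ n then FreeAbelianGroup.of ⟨Quot.mk _ a, h⟩ else 0

theorem AbLe.ofObj_eq_of_iso (n : ℕ) ⦃a b : C⦄ (h : Nonempty (a ≅ b)) :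
    AbLe.ofObj F n a = AbLe.ofObj F n b := by
  obtain ⟨e⟩ := h
  exact dite_congr (by rw [card_eq_of_iso F e])
    (fun _ => congrArg _ (Subtype.ext (Quot.sound ⟨e⟩))) fun _ => rfl

theorem AbLe.ofObj_of_le {n : ℕ} {a : C} (h : Fintype.card (F.obj a) ≤ n) :
    AbLe.ofObj F n a = FreeAbelianGroup.of ⟨Quot.mk _ a, h⟩ :=
  dif_pos h

theorem AbLe.ofObj_eq_zero {n : ℕ} {a : C} (h : n < Fintype.card (F.obj a)) :
    AbLe.ofObj F n a = 0 :=
  dif_neg (Nat.not_le.2 h)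

variable (hF : IsDiagramCat C F) (n : ℕ)

/-- `v` sends to zero the alternating corner sum of every `(n+1)`-cell of `D^□`, i.e. of every
interval `[s, t]` of subdiagrams of an object with `|t \ s| = n + 1`. -/
def KillsCubeRelations {G : Type*} [AddCommGroup G] (v : C → G) : Prop :=
  ∀ (q : C) (s t : Finset (F.obj q)), s ⊆ t → (t \ s).card = n + 1 →
    ∑ u ∈ Icc s t, (-1 : ℤ) ^ (t \ u).card • v (hF.subObj q ↑u) = 0

theorem KillsCubeRelations.map {G H : Type*} [AddCommGroup G] [AddCommGroup H] {v : C → G}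
    (hv : KillsCubeRelations hF n v) (φ : G →+ H) :
    KillsCubeRelations hF n fun a => φ (v a) := by
  intro q s t hst hcard
  simp_rw [← map_zsmul, ← map_sum, hv q s t hst hcard, map_zero]

theorem sFormula_eq_sum (a : C) :
    sFormula hF n a = ∑ T : Finset (F.obj a), AbLe.ofObj F n (hF.subObj a ↑T) :=
  sum_congr rfl fun T _ =>
    dite_congr (by rw [hF.card_subObj]) (fun _ => rfl) fun _ => rfl

theorem sFormula_subObj (a : C) (K : Finset (F.obj a)) :
    sFormula hF n (hF.subObj a ↑K) = ∑ T ∈ K.powerset, AbLe.ofObj F n (hF.subObj a ↑T) := by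
  have h := hF.sum_subObj_map (AbLe.ofObj_eq_of_iso (F := F) n) (hF.subIncl a ↑K) fun _ x => x
  rwa [hF.map_univ_mapEmb_subIncl, ← sFormula_eq_sum] at h

theorem sum_neg_one_pow_smul_sFormula_subObj (a : C) (ha : Fintype.card (F.obj a) ≤ n) :
    ∑ T : Finset (F.obj a), (-1 : ℤ) ^ (univ \ T).card • sFormula hF n (hF.subObj a ↑T) =
      FreeAbelianGroup.of ⟨Quot.mk _ a, ha⟩ := by
  simp_rw [sFormula_subObj]
  rw [← powerset_univ, sum_powerset_neg_one_pow_smul_sum_powerset, coe_univ,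
    AbLe.ofObj_eq_of_iso n (hF.subObj_univ_iso a), AbLe.ofObj_of_le ha]

theorem killsCubeRelations_sFormula : KillsCubeRelations hF n (sFormula hF n) := by
  intro q s t hst hcard
  simp_rw [sFormula_subObj]
  rw [sum_Icc_neg_one_pow_smul_sum_powerset hst, sum_filter]
  refine sum_eq_zero fun T _ => ?_
  split_ifs with hT
  · apply AbLe.ofObj_eq_zero
    rw [hF.card_subObj]
    have := card_le_card hT
    omega
  · rfl

namespace BoxComplex

variable (B : BoxComplex C F)

theorem cells_map_vertex {k : ℕ} (pc : PreCell C F k) (f : cubeObj 0 ⟶ cubeObj k) :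
    B.cells 0 (B.X.map f.op ((B.cells k).symm (Quot.mk _ pc))) =
      objCell C F (hF.subObj pc.q
        ↑(univ \ (Cube.zerosEquiv k (cubeVertex f)).map ⟨pc.lab, pc.inj⟩)) := by
  set K : Set (F.obj pc.q) := ↑(univ \ (Cube.zerosEquiv k (cubeVertex f)).map ⟨pc.lab, pc.inj⟩)
  have hK : KeepSet pc Fin.elim0 (cubeVertex f) = K := by
    ext x
    simp [KeepSet, K, Cube.zerosEquiv]
  have hvertex : ∀ b ∈ Set.range f.1, ∀ i, (∀ j : Fin 0, j.elim0 ≠ i) → b i = cubeVertex f i := by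
    rintro _ ⟨b, rfl⟩ i -
    rw [show b = fun j => j.elim0 from funext fun j => j.elim0]
    rfl
  exact B.map_spec f Fin.elim0 (cubeVertex f) (fun i => i.elim0) (fun _ i => i.elim0) hvertex pc
    ⟨hF.subObj pc.q K, fun i => i.elim0, fun i => i.elim0⟩ (hF.subIncl pc.q K)
    (by rw [hF.range_subIncl, hK]) (fun i => i.elim0)

/-- The corners of the cell `(q, φ)` are the subdiagrams of `q` containing the unlabelled part
of `F(q)`. -/
theorem sum_corners {G : Type*} [AddCommGroup G] (pc : PreCell C F (n + 1))
    (v : DCell C F 0 → G) :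
    ∑ f : cubeObj 0 ⟶ cubeObj (n + 1),
        (-1 : ℤ) ^ cubeWeight f •
          v (B.cells 0 (B.X.map f.op ((B.cells (n + 1)).symm (Quot.mk _ pc)))) =
      (-1 : ℤ) ^ (n + 1) • ∑ u ∈ Icc (univ \ univ.map ⟨pc.lab, pc.inj⟩) univ,
        (-1 : ℤ) ^ (univ \ u).card • v (objCell C F (hF.subObj pc.q ↑u)) := by
  rw [sum_Icc_sdiff_map_univ, smul_sum]
  refine Fintype.sum_equiv ((cubeVertexEquiv (n + 1)).trans (Cube.zerosEquiv (n + 1))) _ _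
    fun f => ?_
  rw [B.cells_map_vertex hF, cubeWeight_eq_card_compl, neg_one_pow_card_compl, Fintype.card_fin,
    mul_smul, Finset.sdiff_sdiff_eq_self (subset_univ _), card_map]
  rfl

end BoxComplex

end

namespace UGroup

variable {X : CubicalComplex} {n : ℕ} {G : Type*} [AddCommGroup G]

theorem sum_mkU_relation (c : X.obj (op (cubeObj (n + 1)))) :
    ∑ f : cubeObj 0 ⟶ cubeObj (n + 1), (-1 : ℤ) ^ cubeWeight f • mkU X n (X.map f.op c) = 0 := by
  have h : QuotientAddGroup.mk' (relSubgroup X n) (relationElt X n c) = 0 :=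
    (QuotientAddGroup.eq_zero_iff _).2 (AddSubgroup.subset_closure ⟨c, rfl⟩)
  simp only [relationElt, map_sum, map_zsmul] at h
  exact h

noncomputable def lift (φ : FreeAbelianGroup (X.obj (op (cubeObj 0))) →+ G)
    (hφ : ∀ c, ∑ f : cubeObj 0 ⟶ cubeObj (n + 1),
      (-1 : ℤ) ^ cubeWeight f • φ (FreeAbelianGroup.of (X.map f.op c)) = 0) :
    UGroup X n →+ G :=
  QuotientAddGroup.lift (relSubgroup X n) φ <| (AddSubgroup.closure_le _).2 <| by
    rintro _ ⟨c, rfl⟩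
    rw [SetLike.mem_coe, AddMonoidHom.mem_ker, relationElt, map_sum]
    simpa only [map_zsmul] using hφ c

theorem lift_mkU (φ : FreeAbelianGroup (X.obj (op (cubeObj 0))) →+ G)
    (hφ : ∀ c, ∑ f : cubeObj 0 ⟶ cubeObj (n + 1),
      (-1 : ℤ) ^ cubeWeight f • φ (FreeAbelianGroup.of (X.map f.op c)) = 0)
    (x : X.obj (op (cubeObj 0))) :
    lift φ hφ (mkU X n x) = φ (FreeAbelianGroup.of x) :=
  rfl

theorem hom_ext {f g : UGroup X n →+ G} (h : ∀ x, f (mkU X n x) = g (mkU X n x)) : f = g :=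
  QuotientAddGroup.addMonoidHom_ext _ (FreeAbelianGroup.lift_ext _ _ h)

end UGroup

/-- The cubical complex `X` is `D^□` with its `0`-cells replaced by `S` along `π`. -/
structure BoxComplex.VertexQuotient (B : BoxComplex C F) {S : Type} (π : DCell C F 0 → S)
    (X : CubicalComplex) where
  e0 : X.obj (op (cubeObj 0)) ≃ S
  epos : ∀ k : ℕ, X.obj (op (cubeObj (k + 1))) ≃ B.X.obj (op (cubeObj (k + 1)))
  map_vertex : ∀ (k : ℕ) (a : cubeObj 0 ⟶ cubeObj (k + 1)) (c : X.obj (op (cubeObj (k + 1)))),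
    e0 (X.map a.op c) = π (B.cells 0 (B.X.map a.op (epos k c)))

noncomputable def sRelations (hF : IsDiagramCat C F) {S : Type} (π : DCell C F 0 → S) (n : ℕ) :
    AddSubgroup (AbLe C F n) :=
  AddSubgroup.closure {z | ∃ a b : C, π (objCell C F a) = π (objCell C F b) ∧
    z = sFormula hF n a - sFormula hF n b}

section

open Finset
open scoped Classical

section SFormulaMod

variable (hF : IsDiagramCat C F) {S : Type} {π : DCell C F 0 → S} (hπ : Function.Surjective π)
  (n : ℕ)

theorem mk_sFormula_eq_of_objCell {a b : C} (h : π (objCell C F a) = π (objCell C F b)) :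
    (sFormula hF n a : AbLe C F n ⧸ sRelations hF π n) = sFormula hF n b :=
  QuotientAddGroup.eq_iff_sub_mem.2 (AddSubgroup.subset_closure ⟨a, b, h, rfl⟩)

/-- `s` descends along `π` modulo `R`. -/
noncomputable def sFormulaMod (σ : S) : AbLe C F n ⧸ sRelations hF π n :=
  sFormula hF n (Function.surjInv (hπ.comp objCell_surjective) σ)

theorem sFormulaMod_objCell (a : C) :
    sFormulaMod hF hπ n (π (objCell C F a)) = sFormula hF n a :=
  mk_sFormula_eq_of_objCell hF n (Function.surjInv_eq (hπ.comp objCell_surjective) _)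

theorem killsCubeRelations_sFormulaMod :
    KillsCubeRelations hF n fun a => sFormulaMod hF hπ n (π (objCell C F a)) := by
  simp_rw [sFormulaMod_objCell]
  exact (killsCubeRelations_sFormula hF n).map hF n (QuotientAddGroup.mk' _)

end SFormulaMod

namespace BoxComplex.VertexQuotient

variable {B : BoxComplex C F} {S : Type} {π : DCell C F 0 → S} {X : CubicalComplex}
  (Q : B.VertexQuotient π X) (hF : IsDiagramCat C F) (hπ : Function.Surjective π) (n : ℕ)

theorem sum_corners_eq_zero {G : Type*} [AddCommGroup G] {w : S → G}
    (hw : KillsCubeRelations hF n fun a => w (π (objCell C F a)))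
    (c : X.obj (op (cubeObj (n + 1)))) :
    ∑ f : cubeObj 0 ⟶ cubeObj (n + 1), (-1 : ℤ) ^ cubeWeight f • w (Q.e0 (X.map f.op c)) = 0 := by
  obtain ⟨pc, hpc⟩ := Quot.exists_rep (B.cells (n + 1) (Q.epos n c))
  have hc : Q.epos n c = (B.cells (n + 1)).symm (Quot.mk _ pc) := by
    rw [hpc, Equiv.symm_apply_apply]
  simp_rw [Q.map_vertex, hc]
  rw [B.sum_corners hF n pc fun d => w (π d), hw pc.q _ univ sdiff_subset, smul_zero]
  rw [Finset.sdiff_sdiff_eq_self (subset_univ _), card_map, card_univ, Fintype.card_fin]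

noncomputable def gen (a : C) : UGroup X n :=
  mkU X n (Q.e0.symm (π (objCell C F a)))

theorem gen_eq_of_iso ⦃a b : C⦄ (h : Nonempty (a ≅ b)) : Q.gen n a = Q.gen n b := by
  rw [gen, gen, objCell_eq_of_iso h]

theorem sum_Icc_gen_eq_zero (pc : PreCell C F (n + 1)) :
    ∑ u ∈ Icc (univ \ univ.map ⟨pc.lab, pc.inj⟩) univ,
      (-1 : ℤ) ^ (univ \ u).card • Q.gen n (hF.subObj pc.q ↑u) = 0 := by
  set y := (B.cells (n + 1)).symm (Quot.mk _ pc)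
  have hvertex : ∀ f : cubeObj 0 ⟶ cubeObj (n + 1), mkU X n (X.map f.op ((Q.epos n).symm y)) =
      mkU X n (Q.e0.symm (π (B.cells 0 (B.X.map f.op y)))) := by
    intro f
    conv_rhs => rw [← (Q.epos n).apply_symm_apply y, ← Q.map_vertex, Equiv.symm_apply_apply]
  have hrel := UGroup.sum_mkU_relation (n := n) ((Q.epos n).symm y)
  simp_rw [hvertex] at hrel
  rw [B.sum_corners hF n pc fun d => mkU X n (Q.e0.symm (π d))] at hrel
  have hsq : (-1 : ℤ) ^ (n + 1) * (-1) ^ (n + 1) = 1 := by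
    rw [← mul_pow, neg_one_mul, neg_neg, one_pow]
  have hcancel : ∀ x : UGroup X n, (-1 : ℤ) ^ (n + 1) • x = 0 → x = 0 := fun x hx => by
    rw [← one_smul ℤ x, ← hsq, mul_smul, hx, smul_zero]
  exact hcancel _ hrel

/-- An interval `[s, t]` of subdiagrams of `q` is the set of corners of a cell of `D^□` carried
by the subdiagram `q_t`. -/
theorem killsCubeRelations_gen : KillsCubeRelations hF n (Q.gen n) := by
  intro q s t hst hcard
  set ι := hF.mapEmb (hF.subIncl q ↑t)
  have hι : univ.map ι = t := hF.map_univ_mapEmb_subIncl q t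
  rw [← hι] at hst
  obtain ⟨s', -, rfl⟩ := subset_map_iff.1 hst
  obtain ⟨lab, hlab⟩ := exists_fin_embedding_map_univ (L := univ \ s') (k := n + 1)
    (by rw [← card_sdiff_map_of_map_univ hι, hcard])
  have h := Q.sum_Icc_gen_eq_zero hF n ⟨hF.subObj q ↑t, lab, lab.injective⟩
  rw [Function.Embedding.mk_coe, hlab, Finset.sdiff_sdiff_eq_self (subset_univ _)] at h
  rw [← hF.sum_Icc_subObj (Q.gen_eq_of_iso n) q t s', h]

noncomputable def moebius (a : C) : UGroup X n :=
  ∑ T : Finset (F.obj a), (-1 : ℤ) ^ (univ \ T).card • Q.gen n (hF.subObj a ↑T)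

theorem moebius_subObj (a : C) (K : Finset (F.obj a)) :
    Q.moebius hF n (hF.subObj a ↑K) =
      ∑ T ∈ K.powerset, (-1 : ℤ) ^ (K \ T).card • Q.gen n (hF.subObj a ↑T) := by
  have hK := hF.map_univ_mapEmb_subIncl a K
  have h := hF.sum_subObj_map (Q.gen_eq_of_iso n) (hF.subIncl a ↑K) fun T x =>
    (-1 : ℤ) ^ (K \ T).card • x
  simp only [card_sdiff_map_of_map_univ hK] at h
  rwa [hK] at h

theorem moebius_eq_of_iso ⦃a b : C⦄ (h : Nonempty (a ≅ b)) :
    Q.moebius hF n a = Q.moebius hF n b := by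
  obtain ⟨e⟩ := h
  have he := hF.map_univ_mapEmb_iso e
  have h := hF.sum_subObj_map (Q.gen_eq_of_iso n) e.hom fun T x => (-1 : ℤ) ^ (univ \ T).card • x
  simp only [card_sdiff_map_of_map_univ he] at h
  rwa [he, powerset_univ] at h

theorem moebius_eq_zero {a : C} (ha : n < Fintype.card (F.obj a)) : Q.moebius hF n a = 0 := by
  rw [moebius, ← powerset_univ]
  exact sum_powerset_neg_one_pow_smul_eq_zero (Q.killsCubeRelations_gen hF n a)
    (by rwa [card_univ])

noncomputable def ofAbLe : AbLe C F n →+ UGroup X n :=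
  FreeAbelianGroup.lift fun c => Quot.lift (Q.moebius hF n) (Q.moebius_eq_of_iso hF n) c.1

theorem ofAbLe_ofObj (a : C) : Q.ofAbLe hF n (AbLe.ofObj F n a) = Q.moebius hF n a := by
  by_cases ha : Fintype.card (F.obj a) ≤ n
  · rw [AbLe.ofObj_of_le ha]
    exact FreeAbelianGroup.lift_apply_of _ _
  · rw [AbLe.ofObj_eq_zero (Nat.lt_of_not_le ha), map_zero,
      Q.moebius_eq_zero hF n (Nat.lt_of_not_le ha)]

theorem ofAbLe_sFormula (a : C) : Q.ofAbLe hF n (sFormula hF n a) = Q.gen n a := by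
  simp_rw [sFormula_eq_sum, map_sum, ofAbLe_ofObj, moebius_subObj]
  rw [← powerset_univ, sum_powerset_sum_powerset_neg_one_pow_smul, coe_univ,
    Q.gen_eq_of_iso n (hF.subObj_univ_iso a)]

noncomputable def toQuot : UGroup X n →+ AbLe C F n ⧸ sRelations hF π n :=
  UGroup.lift (FreeAbelianGroup.lift fun x => sFormulaMod hF hπ n (Q.e0 x)) fun c => by
    simp only [FreeAbelianGroup.lift_apply_of]
    exact Q.sum_corners_eq_zero hF n (killsCubeRelations_sFormulaMod hF hπ n) c

theorem toQuot_gen (a : C) : Q.toQuot hF hπ n (Q.gen n a) = sFormula hF n a := by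
  rw [gen, toQuot, UGroup.lift_mkU, FreeAbelianGroup.lift_apply_of, Equiv.apply_symm_apply,
    sFormulaMod_objCell]

noncomputable def fromQuot : AbLe C F n ⧸ sRelations hF π n →+ UGroup X n :=
  QuotientAddGroup.lift _ (Q.ofAbLe hF n) <| (AddSubgroup.closure_le _).2 <| by
    rintro _ ⟨a, b, hab, rfl⟩
    rw [SetLike.mem_coe, AddMonoidHom.mem_ker, map_sub, ofAbLe_sFormula, ofAbLe_sFormula, gen,
      gen, hab, sub_self]

theorem fromQuot_comp_toQuot :
    (Q.fromQuot hF n).comp (Q.toQuot hF hπ n) = AddMonoidHom.id _ := by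
  refine UGroup.hom_ext fun x => ?_
  obtain ⟨a, ha⟩ := (hπ.comp objCell_surjective) (Q.e0 x)
  have hx : mkU X n x = Q.gen n a := by
    rw [gen, show π (objCell C F a) = Q.e0 x from ha, Equiv.symm_apply_apply]
  rw [AddMonoidHom.comp_apply, hx, toQuot_gen]
  exact Q.ofAbLe_sFormula hF n a

theorem toQuot_comp_fromQuot :
    (Q.toQuot hF hπ n).comp (Q.fromQuot hF n) = AddMonoidHom.id _ := by
  refine QuotientAddGroup.addMonoidHom_ext _ (FreeAbelianGroup.lift_ext _ _ fun ⟨c, hc⟩ => ?_)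
  induction c using Quot.ind with
  | mk q =>
    have h : Q.ofAbLe hF n (FreeAbelianGroup.of ⟨Quot.mk _ q, hc⟩) = Q.moebius hF n q :=
      FreeAbelianGroup.lift_apply_of _ _
    show Q.toQuot hF hπ n (Q.ofAbLe hF n _) = _
    rw [h, moebius, map_sum]
    simp_rw [map_zsmul, toQuot_gen, ← QuotientAddGroup.mk_zsmul, ← QuotientAddGroup.mk_sum]
    rw [sum_neg_one_pow_smul_sFormula_subObj hF n q hc]
    rfl

noncomputable def addEquiv : UGroup X n ≃+ AbLe C F n ⧸ sRelations hF π n :=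
  AddMonoidHom.toAddEquiv (Q.toQuot hF hπ n) (Q.fromQuot hF n) (Q.fromQuot_comp_toQuot hF hπ n)
    (Q.toQuot_comp_fromQuot hF hπ n)

end BoxComplex.VertexQuotient

end

theorem quotient_complex_presentation_general (C : Type) [SmallCategory C] (F : C ⥤ FintypeCat)
    (hF : IsDiagramCat C F) (B : BoxComplex C F)
    (S : Type) (π : DCell C F 0 → S) (hπ : Function.Surjective π)
    (X : CubicalComplex)
    (e0 : X.obj (op (cubeObj 0)) ≃ S)
    (epos : ∀ k : ℕ, X.obj (op (cubeObj (k + 1))) ≃ B.X.obj (op (cubeObj (k + 1))))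
    (hmap0 : ∀ (k : ℕ) (a : cubeObj 0 ⟶ cubeObj (k + 1)) (c : X.obj (op (cubeObj (k + 1)))),
      e0 (X.map a.op c) = π (B.cells 0 (B.X.map a.op (epos k c))))
    (n : ℕ) :
    Nonempty (UGroup X n ≃+
      (AbLe C F n ⧸ AddSubgroup.closure
        {z : AbLe C F n | ∃ a b : C, π (objCell C F a) = π (objCell C F b) ∧
          z = sFormula hF n a - sFormula hF n b})) :=
  ⟨BoxComplex.VertexQuotient.addEquiv ⟨e0, epos, hmap0⟩ hF hπ n⟩

/-- Let `D = (C, F)` be a diagram category (with realization `B` of `D^□`)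
and let `π : D^□₀ → S` be a surjection onto a set `S`.  Let `X` be the cubical complex with
`X₀ = S`, `Xₙ = D^□ₙ` for `n > 0`, whose action is that of `D^□` composed with `π` whenever
the target cell dimension is `0` (morphisms into the `0`-cube only exist from the `0`-cube,
so this is the only modification).  Then for every `n ≥ 0`,
`Uₙ(X) ≅ Ab(D_{≤n}) / R`, where `R` is the subgroup generated by the elements `s(x) − s(y)`
for `0`-cells `x, y` of `D^□` (identified with isomorphism classes of objects) with
`π(x) = π(y)`, `s` being given on generators by `s(a) = ∑_{S ⊆ F(a), |S| ≤ n} a_S`. -/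
theorem quotient_complex_presentation (C : Type) [SmallCategory C] (F : C ⥤ FintypeCat)
    (hF : IsDiagramCat C F) (B : BoxComplex C F)
    (S : Type) (π : DCell C F 0 → S) (hπ : Function.Surjective π)
    (X : CubicalComplex)
    (e0 : X.obj (op (cubeObj 0)) ≃ S)
    (epos : ∀ k : ℕ, X.obj (op (cubeObj (k + 1))) ≃ B.X.obj (op (cubeObj (k + 1))))
    (hmap0 : ∀ (k : ℕ) (a : cubeObj 0 ⟶ cubeObj (k + 1)) (c : X.obj (op (cubeObj (k + 1)))),
      e0 (X.map a.op c) = π (B.cells 0 (B.X.map a.op (epos k c))))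
    (hmappos : ∀ (j k : ℕ) (a : cubeObj (j + 1) ⟶ cubeObj (k + 1))
      (c : X.obj (op (cubeObj (k + 1)))),
      epos j (X.map a.op c) = B.X.map a.op (epos k c))
    (n : ℕ) :
    Nonempty (UGroup X n ≃+
      (AbLe C F n ⧸ AddSubgroup.closure
        {z : AbLe C F n | ∃ a b : C, π (objCell C F a) = π (objCell C F b) ∧
          z = sFormula hF n a - sFormula hF n b})) :=
  quotient_complex_presentation_general C F hF B S π hπ X e0 epos hmap0 n
end

section
/- Let M be a monoid generated by a subset S ⊆ M, let ℤ[M] be the monoid ring of M over ℤ, and let J be the two-sided ideal of ℤ[M] generated by the elements 1 − y for y ∈ S. Then for every n ≥ 0, the quotient ring ℤ[M]/J^{n+1} is generated as an abelian group by the images of the elements of M expressible as products y_1 y_2 ⋯ y_k of at most n elements of S (the empty product being the identity of M). -/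
open CategoryTheory Opposite

/-- The `(n)`-th power of a two-sided ideal: `I⁰ = ⊤` and `I^{k+1}` is the two-sided ideal
spanned by products of an element of `I` with an element of `I^k`. -/
def tsiPow {R : Type} [Ring R] (I : TwoSidedIdeal R) : ℕ → TwoSidedIdeal R
  | 0 => ⊤
  | k + 1 => TwoSidedIdeal.span {x : R | ∃ a ∈ I, ∃ b ∈ tsiPow I k, x = a * b}

/-- The two-sided ideal `J ⊆ ℤ[M]` generated by the elements `1 - y` for `y ∈ S`. -/
noncomputable def Jideal (M : Type) [Monoid M] (S : Set M) : TwoSidedIdeal (MonoidAlgebra ℤ M) :=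
  TwoSidedIdeal.span {x : MonoidAlgebra ℤ M | ∃ y ∈ S, x = 1 - MonoidAlgebra.of ℤ M y}

/-- The quotient ring `ℤ[M]/J^{n+1}`. -/
def JQuot (M : Type) [Monoid M] (S : Set M) (n : ℕ) : Type :=
  ((tsiPow (Jideal M S) (n + 1)).ringCon).Quotient

noncomputable instance (M : Type) [Monoid M] (S : Set M) (n : ℕ) : Ring (JQuot M S n) := by
  unfold JQuot; infer_instance

/-- The quotient map `ℤ[M] → ℤ[M]/J^{n+1}`. -/
noncomputable def JQuotMk (M : Type) [Monoid M] (S : Set M) (n : ℕ) :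
    MonoidAlgebra ℤ M →+* JQuot M S n :=
  RingCon.mk' _

/-!
Write a word `y₁ ⋯ y_k` in the generators as `∏ (1 - (1 - yᵢ))` and expand: it becomes a signed
sum of ordered products `(1 - y_{i₁}) ⋯ (1 - y_{i_j})` over subwords. Such a product lies in
`J^j`, so modulo `J^{n+1}` only the subwords with `j ≤ n` survive, and expanding each of those
back gives a signed sum of words of length at most `j ≤ n`.
-/

theorem List.prod_map_one_sub {ι R : Type} [Ring R] (f : ι → R) (l : List ι) :
    (l.map fun i => 1 - f i).prod =
      (l.sublists'.map fun u => (-1 : ℤ) ^ u.length • (u.map f).prod).sum := by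
  induction l with
  | nil => simp
  | cons i t ih =>
    have hcons : (t.sublists'.map
          ((fun u => (-1 : ℤ) ^ u.length • (u.map f).prod) ∘ (i :: ·))).sum =
        -f i * (t.sublists'.map fun u => (-1 : ℤ) ^ u.length • (u.map f).prod).sum := by
      rw [← List.sum_map_mul_left]
      refine congrArg List.sum (List.map_congr_left fun u _ => ?_)
      simp only [Function.comp_apply, List.length_cons, List.map_cons, List.prod_cons, pow_succ,
        mul_neg_one, neg_smul, neg_mul, mul_smul_comm, smul_neg]
    rw [List.map_cons, List.prod_cons, ih, List.sublists'_cons, List.map_append, List.sum_append,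
      List.map_map, hcons]
    noncomm_ring

theorem tsiPow_antitone {R : Type} [Ring R] (I : TwoSidedIdeal R) : Antitone (tsiPow I) :=
  antitone_nat_of_succ_le fun k x hx => by
    refine (TwoSidedIdeal.mem_span_iff.mp hx) _ ?_
    rintro _ ⟨a, -, b, hb, rfl⟩
    exact (tsiPow I k).mul_mem_left a b hb

section ShortWords

variable {M : Type} [Monoid M] {S : Set M}

noncomputable def oneSubProd (l : List M) : MonoidAlgebra ℤ M :=
  (l.map fun y => 1 - MonoidAlgebra.of ℤ M y).prod

theorem oneSubProd_mem_tsiPow {l : List M} (hl : ∀ y ∈ l, y ∈ S) :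
    oneSubProd l ∈ tsiPow (Jideal M S) l.length := by
  induction l with
  | nil => trivial
  | cons y t ih =>
    refine TwoSidedIdeal.subset_span ⟨1 - MonoidAlgebra.of ℤ M y,
      TwoSidedIdeal.subset_span ⟨y, hl y List.mem_cons_self, rfl⟩, oneSubProd t,
      ih fun z hz => hl z (List.mem_cons_of_mem y hz), List.prod_cons⟩

theorem of_list_prod_eq_sum_oneSubProd (l : List M) :
    MonoidAlgebra.of ℤ M l.prod =
      (l.sublists'.map fun u => (-1 : ℤ) ^ u.length • oneSubProd u).sum := by
  have h := List.prod_map_one_sub (fun y => 1 - MonoidAlgebra.of ℤ M y) l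
  simp only [sub_sub_cancel] at h
  rw [map_list_prod]
  exact h

theorem oneSubProd_eq_sum_of_list_prod (l : List M) :
    oneSubProd l =
      (l.sublists'.map fun u => (-1 : ℤ) ^ u.length • MonoidAlgebra.of ℤ M u.prod).sum := by
  simp only [map_list_prod]
  exact List.prod_map_one_sub (MonoidAlgebra.of ℤ M) l

theorem zsmul_sum_mem_of_forall_sublist {A G : Type} [AddCommGroup G] (H : AddSubgroup G)
    (l : List A) (c : List A → ℤ) (g : List A → G) (hg : ∀ u, u.Sublist l → g u ∈ H) :
    (l.sublists'.map fun u => c u • g u).sum ∈ H :=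
  H.list_sum_mem fun _ hx => by
    obtain ⟨u, hu, rfl⟩ := List.mem_map.mp hx
    exact H.zsmul_mem (hg u (List.mem_sublists'.mp hu)) _

variable (S)

noncomputable def shortWords (n : ℕ) : AddSubgroup (JQuot M S n) :=
  AddSubgroup.closure
    {x : JQuot M S n | ∃ l : List M, l.length ≤ n ∧ (∀ y ∈ l, y ∈ S) ∧
      x = JQuotMk M S n (MonoidAlgebra.of ℤ M l.prod)}

variable {S}

theorem JQuotMk_eq_zero_of_mem {n : ℕ} {x : MonoidAlgebra ℤ M}
    (hx : x ∈ tsiPow (Jideal M S) (n + 1)) : JQuotMk M S n x = 0 :=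
  (map_zero (JQuotMk M S n)).symm ▸ (RingCon.eq _).mpr hx

theorem JQuotMk_oneSubProd_mem_shortWords {n : ℕ} {u : List M} (hu : ∀ y ∈ u, y ∈ S)
    (hlen : u.length ≤ n) : JQuotMk M S n (oneSubProd u) ∈ shortWords S n := by
  rw [oneSubProd_eq_sum_of_list_prod, map_list_sum, List.map_map]
  simp only [Function.comp_def, map_zsmul]
  exact zsmul_sum_mem_of_forall_sublist _ u _ _ fun v hv => AddSubgroup.subset_closure
    ⟨v, hv.length_le.trans hlen, fun y hy => hu y (hv.subset hy), rfl⟩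

theorem JQuotMk_of_mem_shortWords (hgen : Submonoid.closure S = ⊤) (n : ℕ) (m : M) :
    JQuotMk M S n (MonoidAlgebra.of ℤ M m) ∈ shortWords S n := by
  obtain ⟨l, hlS, rfl⟩ := Submonoid.exists_list_of_mem_closure (hgen ▸ Submonoid.mem_top m)
  rw [of_list_prod_eq_sum_oneSubProd, map_list_sum, List.map_map]
  simp only [Function.comp_def, map_zsmul]
  refine zsmul_sum_mem_of_forall_sublist _ l _ _ fun u hu => ?_
  have huS : ∀ y ∈ u, y ∈ S := fun y hy => hlS y (hu.subset hy)
  by_cases hlen : u.length ≤ n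
  · exact JQuotMk_oneSubProd_mem_shortWords huS hlen
  · rw [JQuotMk_eq_zero_of_mem (tsiPow_antitone _ (by omega) (oneSubProd_mem_tsiPow huS))]
    exact zero_mem _

end ShortWords

/-- Let `M` be a monoid generated by `S ⊆ M`, and `J ⊆ ℤ[M]` the two-sided
ideal generated by `{1 − y : y ∈ S}`.  Then for every `n ≥ 0`, the quotient `ℤ[M]/J^{n+1}` is
generated as an abelian group by the images of the elements of `M` expressible as products of
at most `n` elements of `S` (the empty product being `1`). -/
theorem JQuot_generated_by_short_words (M : Type) [Monoid M] (S : Set M)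
    (hgen : Submonoid.closure S = ⊤) (n : ℕ) :
    AddSubgroup.closure
      {x : JQuot M S n | ∃ l : List M, l.length ≤ n ∧ (∀ y ∈ l, y ∈ S) ∧
        x = JQuotMk M S n (MonoidAlgebra.of ℤ M l.prod)} = ⊤ := by
  refine (AddSubgroup.eq_top_iff' (shortWords S n)).mpr fun x => ?_
  obtain ⟨r, rfl⟩ := RingCon.mk'_surjective _ x
  induction r using MonoidAlgebra.induction_on with
  | of m => exact JQuotMk_of_mem_shortWords hgen n m
  | add f g hf hg => exact (map_add (JQuotMk M S n) f g).symm ▸ add_mem hf hg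
  | smul z f hf => exact (map_zsmul (JQuotMk M S n) z f).symm ▸ zsmul_mem hf z
end

section
/- For all nonnegative integers a_1, a_2, b, the function f satisfies f(a_1 + a_2, b + 1) = f(a_1 + a_2 + 1, b + 1) + Σ_{b_1 + b_2 = b} f(a_1, b_1) · f(a_2, b_2), where the sum ranges over all pairs of nonnegative integers (b_1, b_2) with b_1 + b_2 = b. -/
/-!
With `F a = ∑ b, f(a,b) X^b`, the recursion says `F (a+2) = F (a+1) - X F a`, with `F 0 = C` the
Catalan series and `F 1 = 1`. Since `C = 1 + X C²`, the unit `u = 1 - X C` is the inverse of `C`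
and satisfies `u² = u - X`, so `F a = C uᵃ = C^(1-a)`. The theorem is the coefficient of
`X^(b+1)` in `X F a₁ F a₂ = X C² u^(a₁+a₂) = C u^(a₁+a₂) (1 - u) = F (a₁+a₂) - F (a₁+a₂+1)`.
-/

/-- The recursively defined function `f : ℕ × ℕ → ℤ` with `f(0,b) = C_b` (the `b`-th Catalan
number), `f(a,0) = 1`, `f(1,b) = 0` for `b > 0`, and
`f(a,b) = f(a-1,b) - f(a-2,b-1)` for `a > 1`, `b > 0`. -/
def catf : ℕ → ℕ → ℤ
  | 0, b => (catalan b : ℤ)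
  | _ + 1, 0 => 1
  | 1, _ + 1 => 0
  | a + 2, b + 1 => catf (a + 1) (b + 1) - catf a b

open PowerSeries

noncomputable def catfSeries (a : ℕ) : ℤ⟦X⟧ := mk (catf a)

lemma catfSeries_zero_sq_mul_X_add_one : catfSeries 0 ^ 2 * X + 1 = catfSeries 0 := by
  have hcast : catfSeries 0 = map (Nat.castRingHom ℤ) catalanSeries := by
    ext n
    simp [catfSeries, catf]
  rw [hcast]
  simpa using congrArg (map (Nat.castRingHom ℤ)) catalanSeries_sq_mul_X_add_one

lemma catfSeries_one : catfSeries 1 = 1 := by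
  ext (_ | n) <;> simp [catfSeries, catf]

lemma catfSeries_add_two (a : ℕ) :
    catfSeries (a + 2) = catfSeries (a + 1) - X * catfSeries a := by
  ext (_ | n)
  · simp [catfSeries, catf]
  · simp [catfSeries, catf, coeff_succ_X_mul]

lemma catfSeries_eq (a : ℕ) :
    catfSeries a = catfSeries 0 * (1 - X * catfSeries 0) ^ a := by
  have hC := catfSeries_zero_sq_mul_X_add_one
  induction a using Nat.twoStepInduction with
  | zero => simp
  | one => rw [catfSeries_one]; linear_combination hC
  | more a ih₁ ih₂ =>
    rw [catfSeries_add_two, ih₁, ih₂]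
    linear_combination (-X * catfSeries 0 * (1 - X * catfSeries 0) ^ a) * hC

lemma X_mul_catfSeries_mul (a₁ a₂ : ℕ) :
    X * (catfSeries a₁ * catfSeries a₂) = catfSeries (a₁ + a₂) - catfSeries (a₁ + a₂ + 1) := by
  rw [catfSeries_eq a₁, catfSeries_eq a₂, catfSeries_eq (a₁ + a₂), catfSeries_eq (a₁ + a₂ + 1)]
  ring

/-- For all nonnegative integers `a₁, a₂, b`,
`f(a₁+a₂, b+1) = f(a₁+a₂+1, b+1) + ∑_{b₁+b₂=b} f(a₁,b₁)·f(a₂,b₂)`. -/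
theorem catf_rec_identity (a₁ a₂ b : ℕ) :
    catf (a₁ + a₂) (b + 1) =
      catf (a₁ + a₂ + 1) (b + 1) +
        ∑ p ∈ Finset.HasAntidiagonal.antidiagonal b, catf a₁ p.1 * catf a₂ p.2 := by
  have h := congrArg (coeff (b + 1)) (X_mul_catfSeries_mul a₁ a₂)
  rw [coeff_succ_X_mul, coeff_mul, map_sub] at h
  simp only [catfSeries, coeff_mk] at h
  linarith
end
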